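/- arXiv:1806.10388 — 4 statements merged into one kernel-verified Lean document; each statement's English description precedes it below -/
import Mathlib

section
/- Let rⱼ : Pic → Pic be the reflection rⱼ(λ) = λ + (αⱼ·λ) αⱼ (using αⱼ·αⱼ = −2 under the intersection form). Then φ equals the composition r₂ ∘ r₀ ∘ r₁ ∘ r₂ ∘ r₃ ∘ r₄, where the αⱼ are as given. -/
noncomputable section

abbrev Pic : Type := Fin 10 → ℚ

/-- basis vector: index 0 = H_f, 1 = H_g, 2..9 = E₁..E₈ -/
def e (k : Fin 10) : Pic := Pi.single k 1

/-- intersection form: H_f·H_g = 1, H_f² = H_g² = 0, Eᵢ·Eⱼ = −δᵢⱼ, H·Eᵢ = 0 -/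
def ip (x y : Pic) : ℚ :=
  x 0 * y 1 + x 1 * y 0 -
    (x 2 * y 2 + x 3 * y 3 + x 4 * y 4 + x 5 * y 5 +
     x 6 * y 6 + x 7 * y 7 + x 8 * y 8 + x 9 * y 9)

def Hf : Pic := e 0
def Hg : Pic := e 1
def E1 : Pic := e 2
def E2 : Pic := e 3
def E3 : Pic := e 4
def E4 : Pic := e 5
def E5 : Pic := e 6
def E6 : Pic := e 7
def E7 : Pic := e 8
def E8 : Pic := e 9

def d0 : Pic := E1 - E5
def d1 : Pic := E2 - E6
def d2 : Pic := Hf + Hg - E1 - E2 - E3 - E4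
def d3 : Pic := E3 - E7
def d4 : Pic := E4 - E8

def al0 : Pic := Hg - E1 - E5
def al1 : Pic := Hg - E2 - E6
def al2 : Pic := Hf - Hg
def al3 : Pic := Hg - E3 - E7
def al4 : Pic := Hg - E4 - E8

/-- null root = anticanonical class -/
def dn : Pic := 2 • Hf + 2 • Hg - E1 - E2 - E3 - E4 - E5 - E6 - E7 - E8

/-- canonical class -/
def Kcl : Pic := -(2 • Hf) - 2 • Hg + E1 + E2 + E3 + E4 + E5 + E6 + E7 + E8

/-- generalized Cartan matrix of type D₄⁽¹⁾ (node 2 central) -/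
def cartanD4 : Matrix (Fin 5) (Fin 5) ℚ :=
  !![2,0,-1,0,0; 0,2,-1,0,0; -1,-1,2,-1,-1; 0,0,-1,2,0; 0,0,-1,0,2]

/-- the linear map φ of Theorem 3.3, specified by its values on the ten generators -/
def IsPhi (φ : Pic →ₗ[ℚ] Pic) : Prop :=
  φ Hf = 5 • Hf + 2 • Hg - 2 • E1 - 2 • E2 - E3 - E4 - 2 • E5 - 2 • E6 - E7 - E8 ∧
  φ Hg = 2 • Hf + Hg - E1 - E2 - E5 - E6 ∧
  φ E1 = Hf - E5 ∧
  φ E2 = Hf - E6 ∧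
  φ E3 = 2 • Hf + Hg - E1 - E2 - E5 - E6 - E7 ∧
  φ E4 = 2 • Hf + Hg - E1 - E2 - E5 - E6 - E8 ∧
  φ E5 = Hf - E1 ∧
  φ E6 = Hf - E2 ∧
  φ E7 = 2 • Hf + Hg - E1 - E2 - E3 - E5 - E6 ∧
  φ E8 = 2 • Hf + Hg - E1 - E2 - E4 - E5 - E6

/-- reflection in the root α (with α·α = −2): r_α(λ) = λ + (α·λ)α -/
def reflRoot (a : Pic) (l : Pic) : Pic := l + ip a l • a

set_option maxHeartbeats 2000000 in
theorem stmt7 (φ : Pic →ₗ[ℚ] Pic) (hφ : IsPhi φ) :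
    ∀ l : Pic, φ l = reflRoot al2 (reflRoot al0 (reflRoot al1 (reflRoot al2 (reflRoot al3 (reflRoot al4 l))))) := by
  obtain ⟨h0, h1, h2, h3, h4, h5, h6, h7, h8, h9⟩ := hφ
  intro l
  have hl : l = l 0 • Hf + l 1 • Hg + l 2 • E1 + l 3 • E2 + l 4 • E3 + l 5 • E4 +
      l 6 • E5 + l 7 • E6 + l 8 • E7 + l 9 • E8 := by
    funext x
    fin_cases x <;>
      simp [Hf, Hg, E1, E2, E3, E4, E5, E6, E7, E8, e, Pi.single_apply]
  conv_lhs => rw [hl]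
  simp only [map_add, map_smul, h0, h1, h2, h3, h4, h5, h6, h7, h8, h9]
  funext x
  fin_cases x <;>
    simp [reflRoot, ip, al0, al1, al2, al3, al4, Hf, Hg, E1, E2, E3, E4, E5, E6, E7, E8,
      e, Pi.single_apply] <;> ring
end
end

section
/- For the map φ of Theorem 3.3, φ² equals the Kac translation T_{2v} with v = (1/2)(α₃+α₄); in particular φ² acts on the symmetry roots by α₀ ↦ α₀, α₁ ↦ α₁, α₂ ↦ α₂ + 2δ, α₃ ↦ α₃ − 2δ, α₄ ↦ α₄ − 2δ. -/
noncomputable section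

def vv : Pic := (1/2 : ℚ) • (al3 + al4)

def kac (w l : Pic) : Pic :=
  l - ip l dn • w - ((1/2 : ℚ) * ip w w * ip l dn - ip l w) • dn

def kacL (w : Pic) : Pic →ₗ[ℚ] Pic where
  toFun l := kac w l
  map_add' x y := by
    funext j
    simp only [kac, ip, Pi.add_apply, Pi.sub_apply, Pi.smul_apply, smul_eq_mul]
    ring
  map_smul' c x := by
    funext j
    simp only [kac, ip, Pi.smul_apply, Pi.sub_apply, smul_eq_mul, RingHom.id_apply]
    ring

section gens

variable (φ : Pic →ₗ[ℚ] Pic) (hφ : IsPhi φ)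
include hφ

set_option maxHeartbeats 2000000

lemma gen0 : φ (φ Hf) = kac (2 • vv) Hf := by
  obtain ⟨h1,h2,h3,h4,h5,h6,h7,h8,h9,h10⟩ := hφ
  rw [h1]
  simp only [map_add, map_sub, map_smul, map_nsmul, h1,h2,h3,h4,h5,h6,h7,h8,h9,h10]
  funext j
  fin_cases j <;>
  · simp only [kac, ip, vv, dn, al3, al4, Hf, Hg, E1, E2, E3, E4,
      E5, E6, E7, E8, Pi.smul_apply, Pi.sub_apply, Pi.add_apply, smul_eq_mul,
      nsmul_eq_mul, Nat.cast_ofNat]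
    simp (config := { decide := true }) [e, Pi.single_apply]
    try norm_num

lemma gen1 : φ (φ Hg) = kac (2 • vv) Hg := by
  obtain ⟨h1,h2,h3,h4,h5,h6,h7,h8,h9,h10⟩ := hφ
  rw [h2]
  simp only [map_add, map_sub, map_smul, map_nsmul, h1,h2,h3,h4,h5,h6,h7,h8,h9,h10]
  funext j
  fin_cases j <;>
  · simp only [kac, ip, vv, dn, al3, al4, Hf, Hg, E1, E2, E3, E4,
      E5, E6, E7, E8, Pi.smul_apply, Pi.sub_apply, Pi.add_apply, smul_eq_mul,
      nsmul_eq_mul, Nat.cast_ofNat]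
    simp (config := { decide := true }) [e, Pi.single_apply]
    try norm_num

lemma gen2 : φ (φ E1) = kac (2 • vv) E1 := by
  obtain ⟨h1,h2,h3,h4,h5,h6,h7,h8,h9,h10⟩ := hφ
  rw [h3]
  simp only [map_add, map_sub, map_smul, map_nsmul, h1,h2,h3,h4,h5,h6,h7,h8,h9,h10]
  funext j
  fin_cases j <;>
  · simp only [kac, ip, vv, dn, al3, al4, Hf, Hg, E1, E2, E3, E4,
      E5, E6, E7, E8, Pi.smul_apply, Pi.sub_apply, Pi.add_apply, smul_eq_mul,
      nsmul_eq_mul, Nat.cast_ofNat]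
    simp (config := { decide := true }) [e, Pi.single_apply]
    try norm_num

lemma gen3 : φ (φ E2) = kac (2 • vv) E2 := by
  obtain ⟨h1,h2,h3,h4,h5,h6,h7,h8,h9,h10⟩ := hφ
  rw [h4]
  simp only [map_add, map_sub, map_smul, map_nsmul, h1,h2,h3,h4,h5,h6,h7,h8,h9,h10]
  funext j
  fin_cases j <;>
  · simp only [kac, ip, vv, dn, al3, al4, Hf, Hg, E1, E2, E3, E4,
      E5, E6, E7, E8, Pi.smul_apply, Pi.sub_apply, Pi.add_apply, smul_eq_mul,
      nsmul_eq_mul, Nat.cast_ofNat]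
    simp (config := { decide := true }) [e, Pi.single_apply]
    try norm_num

lemma gen4 : φ (φ E3) = kac (2 • vv) E3 := by
  obtain ⟨h1,h2,h3,h4,h5,h6,h7,h8,h9,h10⟩ := hφ
  rw [h5]
  simp only [map_add, map_sub, map_smul, map_nsmul, h1,h2,h3,h4,h5,h6,h7,h8,h9,h10]
  funext j
  fin_cases j <;>
  · simp only [kac, ip, vv, dn, al3, al4, Hf, Hg, E1, E2, E3, E4,
      E5, E6, E7, E8, Pi.smul_apply, Pi.sub_apply, Pi.add_apply, smul_eq_mul,
      nsmul_eq_mul, Nat.cast_ofNat]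
    simp (config := { decide := true }) [e, Pi.single_apply]
    try norm_num

lemma gen5 : φ (φ E4) = kac (2 • vv) E4 := by
  obtain ⟨h1,h2,h3,h4,h5,h6,h7,h8,h9,h10⟩ := hφ
  rw [h6]
  simp only [map_add, map_sub, map_smul, map_nsmul, h1,h2,h3,h4,h5,h6,h7,h8,h9,h10]
  funext j
  fin_cases j <;>
  · simp only [kac, ip, vv, dn, al3, al4, Hf, Hg, E1, E2, E3, E4,
      E5, E6, E7, E8, Pi.smul_apply, Pi.sub_apply, Pi.add_apply, smul_eq_mul,
      nsmul_eq_mul, Nat.cast_ofNat]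
    simp (config := { decide := true }) [e, Pi.single_apply]
    try norm_num

lemma gen6 : φ (φ E5) = kac (2 • vv) E5 := by
  obtain ⟨h1,h2,h3,h4,h5,h6,h7,h8,h9,h10⟩ := hφ
  rw [h7]
  simp only [map_add, map_sub, map_smul, map_nsmul, h1,h2,h3,h4,h5,h6,h7,h8,h9,h10]
  funext j
  fin_cases j <;>
  · simp only [kac, ip, vv, dn, al3, al4, Hf, Hg, E1, E2, E3, E4,
      E5, E6, E7, E8, Pi.smul_apply, Pi.sub_apply, Pi.add_apply, smul_eq_mul,
      nsmul_eq_mul, Nat.cast_ofNat]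
    simp (config := { decide := true }) [e, Pi.single_apply]
    try norm_num

lemma gen7 : φ (φ E6) = kac (2 • vv) E6 := by
  obtain ⟨h1,h2,h3,h4,h5,h6,h7,h8,h9,h10⟩ := hφ
  rw [h8]
  simp only [map_add, map_sub, map_smul, map_nsmul, h1,h2,h3,h4,h5,h6,h7,h8,h9,h10]
  funext j
  fin_cases j <;>
  · simp only [kac, ip, vv, dn, al3, al4, Hf, Hg, E1, E2, E3, E4,
      E5, E6, E7, E8, Pi.smul_apply, Pi.sub_apply, Pi.add_apply, smul_eq_mul,
      nsmul_eq_mul, Nat.cast_ofNat]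
    simp (config := { decide := true }) [e, Pi.single_apply]
    try norm_num

lemma gen8 : φ (φ E7) = kac (2 • vv) E7 := by
  obtain ⟨h1,h2,h3,h4,h5,h6,h7,h8,h9,h10⟩ := hφ
  rw [h9]
  simp only [map_add, map_sub, map_smul, map_nsmul, h1,h2,h3,h4,h5,h6,h7,h8,h9,h10]
  funext j
  fin_cases j <;>
  · simp only [kac, ip, vv, dn, al3, al4, Hf, Hg, E1, E2, E3, E4,
      E5, E6, E7, E8, Pi.smul_apply, Pi.sub_apply, Pi.add_apply, smul_eq_mul,
      nsmul_eq_mul, Nat.cast_ofNat]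
    simp (config := { decide := true }) [e, Pi.single_apply]
    try norm_num

lemma gen9 : φ (φ E8) = kac (2 • vv) E8 := by
  obtain ⟨h1,h2,h3,h4,h5,h6,h7,h8,h9,h10⟩ := hφ
  rw [h10]
  simp only [map_add, map_sub, map_smul, map_nsmul, h1,h2,h3,h4,h5,h6,h7,h8,h9,h10]
  funext j
  fin_cases j <;>
  · simp only [kac, ip, vv, dn, al3, al4, Hf, Hg, E1, E2, E3, E4,
      E5, E6, E7, E8, Pi.smul_apply, Pi.sub_apply, Pi.add_apply, smul_eq_mul,
      nsmul_eq_mul, Nat.cast_ofNat]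
    simp (config := { decide := true }) [e, Pi.single_apply]
    try norm_num

lemma phikey : ∀ l : Pic, φ (φ l) = kac (2 • vv) l := by
  have h : φ.comp φ = kacL (2 • vv) := by
    apply (Pi.basisFun ℚ (Fin 10)).ext
    intro i
    fin_cases i
    · simp only [Pi.basisFun_apply, LinearMap.comp_apply]
      exact gen0 φ hφ
    · simp only [Pi.basisFun_apply, LinearMap.comp_apply]
      exact gen1 φ hφ
    · simp only [Pi.basisFun_apply, LinearMap.comp_apply]
      exact gen2 φ hφ
    · simp only [Pi.basisFun_apply, LinearMap.comp_apply]
      exact gen3 φ hφ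
    · simp only [Pi.basisFun_apply, LinearMap.comp_apply]
      exact gen4 φ hφ
    · simp only [Pi.basisFun_apply, LinearMap.comp_apply]
      exact gen5 φ hφ
    · simp only [Pi.basisFun_apply, LinearMap.comp_apply]
      exact gen6 φ hφ
    · simp only [Pi.basisFun_apply, LinearMap.comp_apply]
      exact gen7 φ hφ
    · simp only [Pi.basisFun_apply, LinearMap.comp_apply]
      exact gen8 φ hφ
    · simp only [Pi.basisFun_apply, LinearMap.comp_apply]
      exact gen9 φ hφ
  exact fun l => LinearMap.congr_fun h l

end gens

set_option maxHeartbeats 2000000 in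
theorem stmt11 (φ : Pic →ₗ[ℚ] Pic) (hφ : IsPhi φ) :
    (∀ l : Pic, φ (φ l) = kac (2 • vv) l) ∧
    φ (φ al0) = al0 ∧ φ (φ al1) = al1 ∧ φ (φ al2) = al2 + 2 • dn ∧
    φ (φ al3) = al3 - 2 • dn ∧ φ (φ al4) = al4 - 2 • dn := by
  have key := phikey φ hφ
  refine ⟨key, ?_, ?_, ?_, ?_, ?_⟩ <;>
  · rw [key]
    funext j
    fin_cases j <;>
    · simp only [kac, ip, vv, dn, al0, al1, al2, al3, al4, Hf, Hg, E1, E2, E3, E4,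
        E5, E6, E7, E8, Pi.smul_apply, Pi.sub_apply, Pi.add_apply, smul_eq_mul,
        nsmul_eq_mul, Nat.cast_ofNat]
      simp (config := { decide := true }) [e, Pi.single_apply]
      try norm_num
end
end

section
/- Let A : Q¹⁰ → Q¹⁰ be the matrix of φ⁻¹ (the inverse of the map φ of Theorem 3.3) in the basis H_f, H_g, E₁,…,E₈. Then for all n ≥ 0, Aⁿ(H_f+H_g)·H_f = 4n² + 2n + 1 and Aⁿ(H_f+H_g)·H_g = 4n² − 2n + 1, where · is the intersection form. -/
noncomputable section

def w (n : ℚ) : Pic :=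
  (4*n^2-2*n+1) • Hf + (4*n^2+2*n+1) • Hg + (n-2*n^2) • (E1+E2+E5+E6) +
    (-2*n^2-n) • (E3+E4+E7+E8)

lemma w_zero : w 0 = Hf + Hg := by
  funext i; fin_cases i <;>
    simp [w, Hf, Hg, E1, E2, E3, E4, E5, E6, E7, E8, e, Pi.single_apply]

lemma step (φ : Pic →ₗ[ℚ] Pic) (hφ : IsPhi φ) (n : ℚ) :
    φ (w (n+1)) = w n := by
  obtain ⟨h0, h1, h2, h3, h4, h5, h6, h7, h8, h9⟩ := hφ
  simp only [w, map_add, map_smul, h0, h1, h2, h3, h4, h5, h6, h7, h8, h9]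
  funext i
  fin_cases i <;>
    · simp [Hf, Hg, E1, E2, E3, E4, E5, E6, E7, E8, e, Pi.single_apply]
      ring

lemma key (φ : Pic ≃ₗ[ℚ] Pic) (hφ : IsPhi φ.toLinearMap) (n : ℕ) :
    (φ.symm.toLinearMap ^ n) (Hf + Hg) = w n := by
  induction n with
  | zero => simp [w_zero]
  | succ n ih =>
      rw [pow_succ', Module.End.mul_apply, ih, ← step φ.toLinearMap hφ n,
        ]
      simp only [LinearEquiv.coe_coe, LinearEquiv.symm_apply_apply]
      norm_cast

theorem stmt14 (φ : Pic ≃ₗ[ℚ] Pic) (hφ : IsPhi φ.toLinearMap) :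
    ∀ n : ℕ,
      ip ((φ.symm.toLinearMap ^ n) (Hf + Hg)) Hf = 4 * (n : ℚ)^2 + 2 * n + 1 ∧
      ip ((φ.symm.toLinearMap ^ n) (Hf + Hg)) Hg = 4 * (n : ℚ)^2 - 2 * n + 1 := by
  intro n
  rw [key φ hφ n]
  constructor <;>
    · simp [ip, w, Hf, Hg, E1, E2, E3, E4, E5, E6, E7, E8, e, Pi.single_apply]
      try ring
end
end

section
/- Define the degree sequence d_n = φ⁻ⁿ(H_f+H_g)·(H_f+H_g). Then d_n = 8n² + 2 for n ≥ 1, so (1/n) log d_n → 0 as n → ∞; i.e. the algebraic entropy of the system is zero. -/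
noncomputable section

/-!
The orbit of `H_f + H_g` under `φ⁻¹` stays in the span of `H_f`, `H_g`, `E₁ + E₂ + E₅ + E₆` and
`E₃ + E₄ + E₇ + E₈`, with coefficients quadratic in `n` (`degreeClass n`); this is checked by
showing that `φ` maps `degreeClass (n + 1)` to `degreeClass n`. Pairing with `H_f + H_g` gives
`d_n = 8n² + 2`, and quadratic growth has zero entropy since `log n / n → 0`.
-/

open Filter Topology

lemma tendsto_one_div_mul_log_of_le_pow {f : ℕ → ℝ} {C : ℝ} (k : ℕ)
    (h_one_le : ∀ᶠ n in atTop, 1 ≤ f n) (h_le_pow : ∀ᶠ n in atTop, f n ≤ C * (n : ℝ) ^ k) :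
    Tendsto (fun n : ℕ => (1 / (n : ℝ)) * Real.log (f n)) atTop (𝓝 0) := by
  have h_log_div : Tendsto (fun n : ℕ => Real.log n / n) atTop (𝓝 0) := by
    simpa [Function.comp_def] using
      (Real.tendsto_pow_log_div_mul_add_atTop 1 0 1 one_ne_zero).comp tendsto_natCast_atTop_atTop
  have h_bound : Tendsto (fun n : ℕ => Real.log C / n + k * (Real.log n / n)) atTop (𝓝 0) := by
    simpa using
      (tendsto_const_div_atTop_nhds_zero_nat (Real.log C)).add (h_log_div.const_mul (k : ℝ))
  refine squeeze_zero' ?_ ?_ h_bound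
  · filter_upwards [h_one_le] with n hn
    exact mul_nonneg (by positivity) (Real.log_nonneg hn)
  · filter_upwards [h_one_le, h_le_pow, eventually_ge_atTop 1] with n h_one h_pow hn
    have hn_pos : (0 : ℝ) < n := by exact_mod_cast hn
    have hC : 0 < C := pos_of_mul_pos_left (by linarith) (by positivity)
    calc (1 / (n : ℝ)) * Real.log (f n)
        ≤ (1 / (n : ℝ)) * Real.log (C * (n : ℝ) ^ k) := by gcongr
      _ = Real.log C / n + k * (Real.log n / n) := by
          rw [Real.log_mul hC.ne' (by positivity), Real.log_pow]
          ring

def degreeClass (n : ℕ) : Pic :=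
  (4 * (n : ℚ) ^ 2 - 2 * n + 1) • Hf + (4 * (n : ℚ) ^ 2 + 2 * n + 1) • Hg
    - (2 * (n : ℚ) ^ 2 - n) • (E1 + E2 + E5 + E6) - (2 * (n : ℚ) ^ 2 + n) • (E3 + E4 + E7 + E8)

lemma degreeClass_zero : degreeClass 0 = Hf + Hg := by
  simp [degreeClass]

lemma IsPhi.apply_degreeClass_succ {φ : Pic →ₗ[ℚ] Pic} (hφ : IsPhi φ) (n : ℕ) :
    φ (degreeClass (n + 1)) = degreeClass n := by
  obtain ⟨hHf, hHg, h1, h2, h3, h4, h5, h6, h7, h8⟩ := hφ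
  simp only [degreeClass, map_add, map_sub, map_smul, hHf, hHg, h1, h2, h3, h4, h5, h6, h7, h8]
  funext i
  fin_cases i <;> simp [Hf, Hg, E1, E2, E3, E4, E5, E6, E7, E8, e] <;> ring

lemma IsPhi.symm_pow_apply_eq_degreeClass {φ : Pic ≃ₗ[ℚ] Pic} (hφ : IsPhi φ.toLinearMap)
    (n : ℕ) : (φ.symm.toLinearMap ^ n) (Hf + Hg) = degreeClass n := by
  induction n with
  | zero => simp [degreeClass_zero]
  | succ n ih =>
    rw [pow_succ', Module.End.mul_apply, ih, LinearEquiv.coe_coe, LinearEquiv.symm_apply_eq]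
    exact (hφ.apply_degreeClass_succ n).symm

lemma ip_degreeClass_Hf_add_Hg (n : ℕ) : ip (degreeClass n) (Hf + Hg) = 8 * (n : ℚ) ^ 2 + 2 := by
  simp [ip, degreeClass, Hf, Hg, E1, E2, E3, E4, E5, E6, E7, E8, e]
  ring

theorem stmt15 (φ : Pic ≃ₗ[ℚ] Pic) (hφ : IsPhi φ.toLinearMap) :
    (∀ n : ℕ, 1 ≤ n →
      ip ((φ.symm.toLinearMap ^ n) (Hf + Hg)) (Hf + Hg) = 8 * (n : ℚ)^2 + 2) ∧
    Filter.Tendsto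
      (fun n : ℕ =>
        (1 / (n : ℝ)) *
          Real.log ((ip ((φ.symm.toLinearMap ^ n) (Hf + Hg)) (Hf + Hg) : ℚ) : ℝ))
      Filter.atTop (nhds 0) := by
  have h_degree (n : ℕ) :
      ip ((φ.symm.toLinearMap ^ n) (Hf + Hg)) (Hf + Hg) = 8 * (n : ℚ) ^ 2 + 2 := by
    rw [hφ.symm_pow_apply_eq_degreeClass, ip_degreeClass_Hf_add_Hg]
  refine ⟨fun n _ => h_degree n, tendsto_one_div_mul_log_of_le_pow (C := 10) 2 ?_ ?_⟩
  · filter_upwards with n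
    rw [h_degree]
    push_cast
    nlinarith [sq_nonneg (n : ℝ)]
  · filter_upwards [eventually_ge_atTop 1] with n hn
    have hn_one : (1 : ℝ) ≤ n := by exact_mod_cast hn
    rw [h_degree]
    push_cast
    nlinarith
end
end
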